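/- Let A be a finite non-associative relation algebra. A has a feeble representation if and only if there is a consistent atomic network (N,λ) over A such that for every atom a of A there exist nodes x,y ∈ N with λ(x,y) = a. -/

import Mathlib

/-- A non-associative relation algebra: a boolean algebra with normal additive
involuted-monoid operators satisfying the Peircean law. -/
class NAAlg (α : Type*) extends BooleanAlgebra α where
  comp : α → α → α
  conv : α → α
  ident : α
  comp_ident : ∀ x : α, comp x ident = x
  ident_comp : ∀ x : α, comp ident x = x
  conv_conv : ∀ x : α, conv (conv x) = x
  conv_comp : ∀ x y : α, conv (comp x y) = comp (conv y) (conv x)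
  conv_bot : conv ⊥ = ⊥
  comp_bot : ∀ x : α, comp x ⊥ = ⊥
  conv_sup : ∀ x y : α, conv (x ⊔ y) = conv x ⊔ conv y
  comp_sup : ∀ x y z : α, comp x (y ⊔ z) = comp x y ⊔ comp x z
  peirce : ∀ x y z : α, comp x y ⊓ conv z = ⊥ ↔ comp y z ⊓ conv x = ⊥

/-- Composition of binary relations. -/
def rcomp {D : Type*} (r s : Set (D × D)) : Set (D × D) :=
  {p | ∃ z, (p.1, z) ∈ r ∧ (z, p.2) ∈ s}

/-- A feeble representation of a non-associative relation algebra: no minimality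
of weak composition is required, only containment of the true composition. -/
structure IsFeebleRep {α D : Type*} [NAAlg α] (φ : α → Set (D × D)) : Prop where
  map_bot : φ ⊥ = ∅
  map_top : φ ⊤ = Set.univ
  map_sup : ∀ a b : α, φ (a ⊔ b) = φ a ∪ φ b
  map_compl : ∀ a : α, φ aᶜ = Set.univ \ φ a
  map_ident : φ NAAlg.ident = {p : D × D | p.1 = p.2}
  map_conv : ∀ a : α, φ (NAAlg.conv a) = {p : D × D | (p.2, p.1) ∈ φ a}
  feeble : ∀ a b : α, rcomp (φ a) (φ b) ⊆ φ (NAAlg.comp a b)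
  nonempty_of_ne_bot : ∀ a : α, a ≠ ⊥ → φ a ≠ ∅

/-! The image of a feeble representation is closed under the boolean operations, so in a finite
algebra every pair of points lies in the image of exactly one atom. Labelling pairs by these atoms
turns any family of points into a consistent atomic network, and two points per atom realise every
atom. Conversely, in a consistent atomic network `λ(x, y) ≤ 1'` is a congruence; on its quotient,
`a ↦ {(x, y) | λ(x, y) ≤ a}` commutes with the boolean operations because labels are atoms, sends
`1'` to the identity, and contains relational composition by the triangle condition. -/

universe u v

namespace NAAlg

variable {α : Type u} [NAAlg α]

theorem conv_mono {a b : α} (h : a ≤ b) : conv a ≤ conv b := by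
  rw [← sup_eq_right, ← conv_sup, sup_eq_right.2 h]

def convOrderIso : α ≃o α where
  toFun := conv
  invFun := conv
  left_inv := conv_conv
  right_inv := conv_conv
  map_rel_iff' {a b} := by
    show conv a ≤ conv b ↔ a ≤ b
    exact ⟨fun h => by simpa only [conv_conv] using conv_mono h, conv_mono⟩

theorem conv_le_conv_iff {a b : α} : conv a ≤ conv b ↔ a ≤ b :=
  convOrderIso.le_iff_le

theorem isAtom_conv {a : α} (ha : IsAtom a) : IsAtom (conv a) :=
  (convOrderIso.isAtom_iff a).2 ha

theorem conv_ident : conv (ident : α) = ident := by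
  calc conv ident = comp (conv ident) (conv (conv ident)) := by rw [conv_conv, comp_ident]
    _ = ident := by rw [← conv_comp, comp_ident, conv_conv]

theorem sup_comp (a b c : α) : comp (a ⊔ b) c = comp a c ⊔ comp b c := by
  rw [← conv_conv (comp (a ⊔ b) c), conv_comp, conv_sup, comp_sup, conv_sup, ← conv_comp,
    ← conv_comp, conv_conv, conv_conv]

theorem comp_mono {a b c d : α} (hac : a ≤ c) (hbd : b ≤ d) : comp a b ≤ comp c d :=
  calc comp a b ≤ comp c b := by rw [← sup_eq_right, ← sup_comp, sup_eq_right.2 hac]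
    _ ≤ comp c d := by rw [← sup_eq_right, ← comp_sup, sup_eq_right.2 hbd]

end NAAlg

theorem IsAtom.le_sup_iff {β : Type*} [DistribLattice β] [OrderBot β] {a b c : β}
    (ha : IsAtom a) : a ≤ b ⊔ c ↔ a ≤ b ∨ a ≤ c := by
  refine ⟨fun h => ?_, fun h => h.elim (le_sup_of_le_left ·) (le_sup_of_le_right ·)⟩
  by_contra! hbc
  rw [ha.not_le_iff_disjoint, ha.not_le_iff_disjoint] at hbc
  exact ha.ne_bot ((hbc.1.sup_right hbc.2).eq_bot_of_le h)

theorem IsAtom.le_compl_iff {β : Type*} [BooleanAlgebra β] {a b : β} (ha : IsAtom a) :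
    a ≤ bᶜ ↔ ¬ a ≤ b := by
  rw [le_compl_iff_disjoint_right, ha.not_le_iff_disjoint]

open NAAlg

structure IsConsistentAtomicNetwork {α N : Type*} [NAAlg α] (lam : N → N → α) : Prop where
  diag_le_ident : ∀ x, lam x x ≤ ident
  comp_inf_ne_bot : ∀ x y z, comp (lam x y) (lam y z) ⊓ lam x z ≠ ⊥
  inf_conv_ne_bot : ∀ x y, lam x y ⊓ conv (lam y x) ≠ ⊥
  isAtom : ∀ x y, IsAtom (lam x y)

namespace IsFeebleRep

variable {α : Type u} {D : Type v} [NAAlg α] {φ : α → Set (D × D)} (hφ : IsFeebleRep φ)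
include hφ

theorem map_inf (a b : α) : φ (a ⊓ b) = φ a ∩ φ b := by
  rw [← compl_compl (a ⊓ b), compl_inf, hφ.map_compl, hφ.map_sup, hφ.map_compl, hφ.map_compl]
  ext p
  simp only [Set.mem_sdiff, Set.mem_union, Set.mem_univ, true_and, Set.mem_inter_iff]
  tauto

theorem inf_ne_bot_of_mem {a b : α} {p : D × D} (ha : p ∈ φ a) (hb : p ∈ φ b) : a ⊓ b ≠ ⊥ := by
  intro hab
  have hp : p ∈ φ (a ⊓ b) := by rw [hφ.map_inf]; exact ⟨ha, hb⟩
  rw [hab, hφ.map_bot] at hp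
  exact hp

theorem le_of_isAtom_of_mem {a b : α} {p : D × D} (ha : IsAtom a) (hpa : p ∈ φ a)
    (hpb : p ∈ φ b) : a ≤ b :=
  ha.not_disjoint_iff_le.1 fun hab => hφ.inf_ne_bot_of_mem hpa hpb hab.eq_bot

theorem eq_of_isAtom_of_mem {a b : α} {p : D × D} (ha : IsAtom a) (hb : IsAtom b)
    (hpa : p ∈ φ a) (hpb : p ∈ φ b) : a = b :=
  (hb.le_iff_eq ha.ne_bot).1 (hφ.le_of_isAtom_of_mem ha hpa hpb)

/-- A minimal element whose image contains `p` is an atom, since `φ c` and `φ cᶜ` split `φ b`. -/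
theorem exists_isAtom_mem [Finite α] (p : D × D) : ∃ a, IsAtom a ∧ p ∈ φ a := by
  obtain ⟨b, hpb, hmin⟩ := exists_minimal_of_wellFoundedLT (fun b => p ∈ φ b)
    ⟨⊤, by rw [hφ.map_top]; trivial⟩
  refine ⟨b, ⟨fun hb => by rw [hb, hφ.map_bot] at hpb; exact hpb, fun c hcb => ?_⟩, hpb⟩
  by_cases hpc : p ∈ φ c
  · exact absurd (hmin hpc hcb.le) hcb.not_ge
  · have hpbc : p ∈ φ (b ⊓ cᶜ) := by
      rw [hφ.map_inf, hφ.map_compl]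
      exact ⟨hpb, trivial, hpc⟩
    have hbc : b ≤ cᶜ := (hmin hpbc inf_le_left).trans inf_le_right
    exact le_compl_self.1 (hcb.le.trans hbc)

theorem isConsistentAtomicNetwork {N : Type*} (f : N → D) {lam : N → N → α}
    (hatom : ∀ x y, IsAtom (lam x y)) (hmem : ∀ x y, (f x, f y) ∈ φ (lam x y)) :
    IsConsistentAtomicNetwork lam where
  diag_le_ident x :=
    hφ.le_of_isAtom_of_mem (hatom x x) (hmem x x) (by rw [hφ.map_ident]; rfl)
  comp_inf_ne_bot x y z :=
    hφ.inf_ne_bot_of_mem (hφ.feeble _ _ ⟨f y, hmem x y, hmem y z⟩) (hmem x z)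
  inf_conv_ne_bot x y :=
    hφ.inf_ne_bot_of_mem (hmem x y) (by rw [hφ.map_conv]; exact hmem y x)
  isAtom := hatom

/-- The network on two nodes per atom `a`, namely the endpoints of a chosen pair in `φ a`,
each edge labelled by the unique atom whose image contains it. -/
theorem exists_network [Finite α] :
    ∃ (N : Type u) (_ : Fintype N) (lam : N → N → α),
      IsConsistentAtomicNetwork lam ∧ ∀ a : α, IsAtom a → ∃ x y : N, lam x y = a := by
  choose lab hlab_atom hlab_mem using hφ.exists_isAtom_mem
  choose pt hpt using fun a : {a : α // IsAtom a} =>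
    Set.nonempty_iff_ne_empty.2 (hφ.nonempty_of_ne_bot a.1 a.2.ne_bot)
  let f : {a : α // IsAtom a} × Bool → D := fun u => cond u.2 (pt u.1).1 (pt u.1).2
  refine ⟨_, Fintype.ofFinite _, fun u v => lab (f u, f v),
    hφ.isConsistentAtomicNetwork f (fun _ _ => hlab_atom _) (fun _ _ => hlab_mem _),
    fun a ha => ⟨(⟨a, ha⟩, true), (⟨a, ha⟩, false), ?_⟩⟩
  exact hφ.eq_of_isAtom_of_mem (hlab_atom _) ha (hlab_mem _) (hpt ⟨a, ha⟩)

end IsFeebleRep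

namespace IsConsistentAtomicNetwork

variable {α : Type u} {N : Type v} [NAAlg α] {lam : N → N → α}
  (hN : IsConsistentAtomicNetwork lam)
include hN

theorem le_of_comp_le {x y z : N} {c : α} (h : comp (lam x y) (lam y z) ≤ c) : lam x z ≤ c :=
  (hN.isAtom x z).not_disjoint_iff_le.1 fun hd =>
    hN.comp_inf_ne_bot x y z (hd.symm.mono_left h).eq_bot

theorem conv_label (x y : N) : conv (lam x y) = lam y x :=
  (((isAtom_conv (hN.isAtom x y)).le_iff_eq (hN.isAtom y x).ne_bot).1
    ((hN.isAtom y x).not_disjoint_iff_le.1 fun hd => hN.inf_conv_ne_bot y x hd.eq_bot)).symm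

theorem le_ident_symm {x y : N} (h : lam x y ≤ ident) : lam y x ≤ ident := by
  rw [← hN.conv_label, ← conv_ident]
  exact conv_mono h

theorem le_ident_trans {x y z : N} (hxy : lam x y ≤ ident) (hyz : lam y z ≤ ident) :
    lam x z ≤ ident :=
  hN.le_of_comp_le ((comp_mono hxy hyz).trans (comp_ident ident).le)

theorem label_eq_of_le_ident_left {x x' y : N} (h : lam x' x ≤ ident) : lam x' y = lam x y :=
  ((hN.isAtom x y).le_iff_eq (hN.isAtom x' y).ne_bot).1
    (hN.le_of_comp_le ((comp_mono h le_rfl).trans (ident_comp _).le))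

theorem label_eq_of_le_ident_right {x y y' : N} (h : lam y y' ≤ ident) : lam x y' = lam x y :=
  ((hN.isAtom x y).le_iff_eq (hN.isAtom x y').ne_bot).1
    (hN.le_of_comp_le ((comp_mono le_rfl h).trans (comp_ident _).le))

/-- Nodes joined by an edge below `1'`; in the quotient network `1'` labels exactly the loops. -/
def setoid : Setoid N where
  r x y := lam x y ≤ ident
  iseqv := ⟨hN.diag_le_ident, hN.le_ident_symm, hN.le_ident_trans⟩

theorem label_congr {x y x' y' : N} (hx : lam x x' ≤ ident) (hy : lam y y' ≤ ident) :
    lam x y = lam x' y' :=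
  (hN.label_eq_of_le_ident_left (hN.le_ident_symm hx)).symm.trans
    (hN.label_eq_of_le_ident_right hy).symm

def quotLabel : Quotient hN.setoid → Quotient hN.setoid → α :=
  Quotient.lift₂ lam fun _ _ _ _ => hN.label_congr

theorem quotient : IsConsistentAtomicNetwork hN.quotLabel where
  diag_le_ident := by rintro ⟨x⟩; exact hN.diag_le_ident x
  comp_inf_ne_bot := by rintro ⟨x⟩ ⟨y⟩ ⟨z⟩; exact hN.comp_inf_ne_bot x y z
  inf_conv_ne_bot := by rintro ⟨x⟩ ⟨y⟩; exact hN.inf_conv_ne_bot x y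
  isAtom := by rintro ⟨x⟩ ⟨y⟩; exact hN.isAtom x y

theorem quotLabel_le_ident_iff (p q : Quotient hN.setoid) : hN.quotLabel p q ≤ ident ↔ p = q := by
  induction p, q using Quotient.inductionOn₂ with
  | h x y => exact ⟨fun h => Quotient.sound h, fun h => Quotient.exact h⟩

omit hN in
theorem isFeebleRep [IsAtomic α] (hN : IsConsistentAtomicNetwork lam)
    (hident : ∀ x y, lam x y ≤ ident ↔ x = y) (hsurj : ∀ a, IsAtom a → ∃ x y, lam x y = a) :
    IsFeebleRep fun a : α => {p : N × N | lam p.1 p.2 ≤ a} where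
  map_bot := Set.eq_empty_iff_forall_notMem.2 fun p hp => (hN.isAtom p.1 p.2).ne_bot (le_bot_iff.1 hp)
  map_top := by
    ext p
    simp
  map_sup a b := by
    ext p
    exact (hN.isAtom p.1 p.2).le_sup_iff
  map_compl a := by
    ext p
    simp only [Set.mem_sdiff, Set.mem_univ, true_and]
    exact (hN.isAtom p.1 p.2).le_compl_iff
  map_ident := by
    ext p
    exact hident p.1 p.2
  map_conv a := by
    ext p
    show lam p.1 p.2 ≤ conv a ↔ lam p.2 p.1 ≤ a
    rw [← hN.conv_label p.2 p.1, conv_le_conv_iff]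
  feeble a b := by
    rintro p ⟨z, hxz, hzy⟩
    exact hN.le_of_comp_le (comp_mono hxz hzy)
  nonempty_of_ne_bot a ha := by
    obtain ⟨b, hb, hba⟩ := (eq_bot_or_exists_atom_le a).resolve_left ha
    obtain ⟨x, y, hxy⟩ := hsurj b hb
    exact Set.nonempty_iff_ne_empty.1 ⟨(x, y), hxy.trans_le hba⟩

theorem exists_isFeebleRep [IsAtomic α] (hsurj : ∀ a, IsAtom a → ∃ x y, lam x y = a) :
    ∃ (D : Type v) (φ : α → Set (D × D)), IsFeebleRep φ := by
  refine ⟨_, _, hN.quotient.isFeebleRep hN.quotLabel_le_ident_iff fun a ha => ?_⟩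
  obtain ⟨x, y, hxy⟩ := hsurj a ha
  exact ⟨⟦x⟧, ⟦y⟧, hxy⟩

end IsConsistentAtomicNetwork

theorem stmt15 {α : Type} [NAAlg α] [Fintype α] :
    (∃ (D : Type) (φ : α → Set (D × D)), IsFeebleRep φ) ↔
    (∃ (N : Type) (_ : Fintype N) (lam : N → N → α),
      (∀ x : N, lam x x ≤ NAAlg.ident) ∧
      (∀ x y z : N, NAAlg.comp (lam x y) (lam y z) ⊓ lam x z ≠ ⊥) ∧
      (∀ x y : N, lam x y ⊓ NAAlg.conv (lam y x) ≠ ⊥) ∧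
      (∀ x y : N, lam x y ≠ ⊥) ∧
      (∀ x y : N, IsAtom (lam x y)) ∧
      (∀ a : α, IsAtom a → ∃ x y : N, lam x y = a)) := by
  constructor
  · rintro ⟨D, φ, hφ⟩
    obtain ⟨N, hfin, lam, hN, hsurj⟩ := hφ.exists_network
    exact ⟨N, hfin, lam, hN.diag_le_ident, hN.comp_inf_ne_bot, hN.inf_conv_ne_bot,
      fun x y => (hN.isAtom x y).ne_bot, hN.isAtom, hsurj⟩
  · rintro ⟨N, _, lam, hdiag, hcomp, hconv, -, hatom, hsurj⟩
    exact IsConsistentAtomicNetwork.exists_isFeebleRep ⟨hdiag, hcomp, hconv, hatom⟩ hsurj
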